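/- Let (X,d) be an indecomposable metric continuum. Then there exists a sequence (K_n)_{n<ω} of pairwise disjoint proper subcontinua of X such that d_H(K_n, X) := sup_{x∈X} d(x, K_n) → 0 as n → ∞. -/

import Mathlib

/-! Distinct composants of an indecomposable continuum are disjoint, and each composant is meagre:
it is covered by countably many proper subcontinua, and these have empty interior. By Baire there
are therefore infinitely many composants. Boundary bumping puts, inside every composant, proper
subcontinua that are `ε`-dense for any `ε > 0`; one `1/(n+1)`-dense subcontinuum in each of
infinitely many distinct composants gives the sequence. -/

open Set Metric TopologicalSpace

structure IsProperClosedConnected {X : Type*} [TopologicalSpace X] (A : Set X) : Prop where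
  isClosed : IsClosed A
  isConnected : IsConnected A
  ne_univ : A ≠ univ

def IsIndecomposable (X : Type*) [TopologicalSpace X] : Prop :=
  ¬ ∃ A B : Set X, IsClosed A ∧ IsConnected A ∧ A ≠ univ ∧
    IsClosed B ∧ IsConnected B ∧ B ≠ univ ∧ A ∪ B = univ

def composant {X : Type*} [TopologicalSpace X] (p : X) : Set X :=
  {x | ∃ A : Set X, IsProperClosedConnected A ∧ p ∈ A ∧ x ∈ A}

section Topological

variable {X : Type*} [TopologicalSpace X]

theorem IsClosed.connectedComponentIn {E : Set X} (hE : IsClosed E) (x : X) :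
    IsClosed (connectedComponentIn E x) := by
  by_cases hx : x ∈ E
  · rw [connectedComponentIn_eq_image hx]
    exact hE.isClosedEmbedding_subtypeVal.isClosedMap _ isClosed_connectedComponent
  · simp [connectedComponentIn_eq_empty hx]

theorem isProperClosedConnected_connectedComponentIn {E : Set X} (hE : IsClosed E)
    (hEu : E ≠ univ) {x : X} (hx : x ∈ E) :
    IsProperClosedConnected (connectedComponentIn E x) :=
  ⟨hE.connectedComponentIn x, isConnected_connectedComponentIn_iff.2 hx,
    fun h => hEu (eq_univ_of_univ_subset (h ▸ connectedComponentIn_subset E x))⟩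

theorem isProperClosedConnected_singleton [T1Space X] [Nontrivial X] (x : X) :
    IsProperClosedConnected ({x} : Set X) :=
  ⟨isClosed_singleton, isConnected_singleton, singleton_ne_univ x⟩

/-- A closed-set form of a lemma of Kuratowski. -/
theorem IsPreconnected.union_of_union_union_eq_univ [PreconnectedSpace X] {A P Q : Set X}
    (hA : IsPreconnected A) (hAc : IsClosed A) (hP : IsClosed P) (hQ : IsClosed Q)
    (hPQ : Disjoint P Q) (hcover : A ∪ P ∪ Q = univ) : IsPreconnected (A ∪ P) := by
  rw [isPreconnected_iff_subset_of_fully_disjoint_closed (hAc.union hP)]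
  intro u v hu hv hcov huv
  wlog hAu : A ⊆ u generalizing u v
  · have hAv := ((isPreconnected_iff_subset_of_fully_disjoint_closed hAc).1 hA u v hu hv
      (subset_union_left.trans hcov) huv).resolve_left hAu
    exact (this v u hv hu (union_comm u v ▸ hcov) huv.symm hAv).symm
  have hsplit : univ ⊆ (u ∪ Q) ∪ (v ∩ P) := by
    intro x _
    rcases (hcover ▸ mem_univ x : x ∈ A ∪ P ∪ Q) with (hxA | hxP) | hxQ
    · exact Or.inl (Or.inl (hAu hxA))
    · rcases hcov (Or.inr hxP) with hxu | hxv
      exacts [Or.inl (Or.inl hxu), Or.inr ⟨hxv, hxP⟩]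
    · exact Or.inl (Or.inr hxQ)
  rcases (isPreconnected_iff_subset_of_fully_disjoint_closed isClosed_univ).1 isPreconnected_univ
    _ _ (hu.union hQ) (hv.inter hP) hsplit
    (disjoint_union_left.2 ⟨huv.mono_right inter_subset_left,
      hPQ.symm.mono_right inter_subset_right⟩) with h | h
  · refine Or.inl (union_subset hAu fun x hxP => ?_)
    exact (h (mem_univ x)).resolve_right (disjoint_left.1 hPQ hxP)
  · exact Or.inr fun x _ => (h (mem_univ x)).1

theorem exists_isClopen_subset_of_connectedComponent_subset [CompactSpace X] [T2Space X]
    {x : X} {U : Set X} (hU : IsOpen U) (h : connectedComponent x ⊆ U) :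
    ∃ V, IsClopen V ∧ x ∈ V ∧ V ⊆ U := by
  let N := {V : Set X // IsClopen V ∧ x ∈ V}
  have : Nonempty N := ⟨⟨univ, isClopen_univ, mem_univ x⟩⟩
  have hdir : Directed (· ⊇ ·) fun V : N => V.1 := fun V W =>
    ⟨⟨V.1 ∩ W.1, V.2.1.inter W.2.1, V.2.2, W.2.2⟩, inter_subset_left, inter_subset_right⟩
  obtain ⟨V, hVU⟩ := exists_subset_nhds_of_compactSpace hdir (fun V => V.2.1.isClosed)
    fun y hy => hU.mem_nhds (h (connectedComponent_eq_iInter_isClopen x ▸ hy))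
  exact ⟨V.1, V.2.1, V.2.2, hVU⟩

/-- The boundary bumping theorem. -/
theorem connectedComponentIn_inter_frontier_nonempty [CompactSpace X] [T2Space X]
    [PreconnectedSpace X] {E : Set X} (hE : IsClosed E) (hEu : E ≠ univ) {x : X} (hx : x ∈ E) :
    (connectedComponentIn E x ∩ frontier E).Nonempty := by
  by_contra hempty
  have : CompactSpace E := isCompact_iff_compactSpace.1 hE.isCompact
  have hsub : connectedComponent (⟨x, hx⟩ : E) ⊆ (↑) ⁻¹' interior E := by
    intro z hz
    have hzx : (z : X) ∈ connectedComponentIn E x :=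
      connectedComponentIn_eq_image hx ▸ mem_image_of_mem _ hz
    by_contra hzi
    exact hempty ⟨z, hzx, hE.frontier_eq ▸ ⟨z.2, hzi⟩⟩
  obtain ⟨V, hV, hxV, hVU⟩ := exists_isClopen_subset_of_connectedComponent_subset
    (isOpen_interior.preimage continuous_subtype_val) hsub
  obtain ⟨O, hO, rfl⟩ := isOpen_induced_iff.1 hV.isOpen
  have hW : (↑) '' ((↑) ⁻¹' O : Set E) = O ∩ interior E := by
    rw [Subtype.image_preimage_coe]
    refine subset_antisymm (fun y hy => ⟨hy.2, ?_⟩) fun y hy => ⟨interior_subset hy.2, hy.1⟩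
    simpa using hVU (show (⟨y, hy.1⟩ : E) ∈ (↑) ⁻¹' O from hy.2)
  have hWclopen : IsClopen (O ∩ interior E) :=
    ⟨hW ▸ hE.isClosedEmbedding_subtypeVal.isClosedMap _ hV.isClosed,
      hO.inter isOpen_interior⟩
  have := hWclopen.eq_univ ⟨x, hxV, hVU hxV⟩
  exact hEu (eq_univ_of_univ_subset (this ▸ inter_subset_right.trans interior_subset))

end Topological

namespace IsIndecomposable

variable {X : Type*} [TopologicalSpace X] (hX : IsIndecomposable X)
include hX

theorem union_ne_univ {A B : Set X} (hA : IsProperClosedConnected A)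
    (hB : IsProperClosedConnected B) : A ∪ B ≠ univ := fun h =>
  hX ⟨A, B, hA.isClosed, hA.isConnected, hA.ne_univ, hB.isClosed, hB.isConnected, hB.ne_univ, h⟩

theorem isProperClosedConnected_union {A B : Set X} (hA : IsProperClosedConnected A)
    (hB : IsProperClosedConnected B) (hAB : (A ∩ B).Nonempty) :
    IsProperClosedConnected (A ∪ B) :=
  ⟨hA.isClosed.union hB.isClosed, IsConnected.union hAB hA.isConnected hB.isConnected,
    hX.union_ne_univ hA hB⟩

theorem isProperClosedConnected_union_biUnion {ι : Type*} {N : Set X}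
    (hN : IsProperClosedConnected N) {p : X} (hpN : p ∈ N) {A : ι → Set X}
    (hA : ∀ i, IsProperClosedConnected (A i) ∧ p ∈ A i) (t : Finset ι) :
    IsProperClosedConnected (N ∪ ⋃ i ∈ t, A i) := by
  classical
  induction t using Finset.induction_on with
  | empty => simpa using hN
  | insert i t _ ih =>
    rw [Finset.set_biUnion_insert, union_left_comm]
    exact hX.isProperClosedConnected_union (hA i).1 ih ⟨p, (hA i).2, Or.inl hpN⟩

/-- Otherwise `B = closure Aᶜ` is a proper closed set with `A ∪ B = univ`; if `B` is disconnected,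
`A` together with each of its two pieces decomposes `X` by Kuratowski's lemma. -/
theorem interior_eq_empty [PreconnectedSpace X] {A : Set X} (hA : IsProperClosedConnected A) :
    interior A = ∅ := by
  by_contra hint
  set B := closure Aᶜ with hB
  have hBclosed : IsClosed B := isClosed_closure
  have hAB : A ∪ B = univ := eq_univ_of_forall fun x =>
    (em (x ∈ A)).imp id fun hx => subset_closure hx
  have hB_ne_univ : B ≠ univ := by
    rw [hB, closure_compl, ← compl_empty, Ne, compl_inj_iff]
    exact hint
  have hBne : B.Nonempty :=
    ((ne_univ_iff_exists_notMem A).1 hA.ne_univ).imp fun _ hx => subset_closure hx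
  have piece : ∀ {u v : Set X}, IsClosed u → IsClosed v → B ⊆ u ∪ v → Disjoint u v →
      ¬ B ⊆ u → IsProperClosedConnected (A ∪ (B ∩ u)) := by
    intro u v hu hv hBuv huv hBu
    obtain ⟨b, hbB, hbu⟩ := not_subset.1 hBu
    obtain ⟨y, hyu, hyA⟩ := mem_closure_iff.1 hbB uᶜ hu.isOpen_compl hbu
    refine ⟨hA.isClosed.union (hBclosed.inter hu), ⟨hA.isConnected.nonempty.inl,
      hA.isConnected.isPreconnected.union_of_union_union_eq_univ hA.isClosed
        (hBclosed.inter hu) (hBclosed.inter hv)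
        (huv.mono inter_subset_right inter_subset_right) ?_⟩, ?_⟩
    · rw [union_assoc, ← inter_union_distrib_left, inter_eq_left.2 hBuv, hAB]
    · exact (ne_univ_iff_exists_notMem _).2 ⟨y, fun hy => hy.elim hyA fun hy => hyu hy.2⟩
  by_cases hBc : IsPreconnected B
  · exact hX ⟨A, B, hA.isClosed, hA.isConnected, hA.ne_univ, hBclosed, ⟨hBne, hBc⟩,
      hB_ne_univ, hAB⟩
  rw [isPreconnected_iff_subset_of_fully_disjoint_closed hBclosed] at hBc
  push Not at hBc
  obtain ⟨u, v, hu, hv, hBuv, huv, hBu, hBv⟩ := hBc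
  refine hX.union_ne_univ (piece hu hv hBuv huv hBu)
    (piece hv hu (union_comm u v ▸ hBuv) huv.symm hBv) ?_
  rw [union_union_union_comm, union_self, ← inter_union_distrib_left,
    inter_eq_left.2 hBuv, hAB]

end IsIndecomposable

section Composant

variable {X : Type*} [TopologicalSpace X]

theorem subset_composant {A : Set X} (hA : IsProperClosedConnected A) {p : X} (hp : p ∈ A) :
    A ⊆ composant p :=
  fun _ hx => ⟨A, hA, hp, hx⟩

theorem mem_composant_self [T1Space X] [Nontrivial X] (p : X) : p ∈ composant p :=
  subset_composant (isProperClosedConnected_singleton p) rfl rfl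

namespace IsIndecomposable

variable (hX : IsIndecomposable X)
include hX

theorem composant_eq_of_mem {p q : X} (hq : q ∈ composant p) : composant q = composant p := by
  obtain ⟨A, hA, hpA, hqA⟩ := hq
  ext x
  constructor
  · rintro ⟨B, hB, hqB, hxB⟩
    exact ⟨A ∪ B, hX.isProperClosedConnected_union hA hB ⟨q, hqA, hqB⟩, Or.inl hpA, Or.inr hxB⟩
  · rintro ⟨B, hB, hpB, hxB⟩
    exact ⟨A ∪ B, hX.isProperClosedConnected_union hA hB ⟨p, hpA, hpB⟩, Or.inl hqA, Or.inr hxB⟩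

theorem disjoint_composant {p q : X} (h : composant p ≠ composant q) :
    Disjoint (composant p) (composant q) :=
  disjoint_left.2 fun _ hxp hxq =>
    h ((hX.composant_eq_of_mem hxp).symm.trans (hX.composant_eq_of_mem hxq))

/-- A proper closed connected set through `p` misses some basic open set `U`, so it lies in the
component of `p` in `Uᶜ`; these countably many components are nowhere dense. -/
theorem isMeagre_composant [PreconnectedSpace X] [SecondCountableTopology X] (p : X) :
    IsMeagre (composant p) := by
  have hcover : composant p ⊆ ⋃ U ∈ countableBasis X, connectedComponentIn Uᶜ p := by
    rintro x ⟨A, hA, hpA, hxA⟩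
    obtain ⟨y, hy⟩ := (ne_univ_iff_exists_notMem A).1 hA.ne_univ
    obtain ⟨U, hU, -, hUA⟩ :=
      (isBasis_countableBasis X).exists_subset_of_mem_open hy hA.isClosed.isOpen_compl
    exact mem_biUnion hU (hA.isConnected.isPreconnected.subset_connectedComponentIn hpA
      (subset_compl_comm.1 hUA) hxA)
  refine (isMeagre_biUnion (countable_countableBasis X) fun U hU => ?_).mono hcover
  have hUc : IsClosed Uᶜ := (isOpen_of_mem_countableBasis hU).isClosed_compl
  by_cases hp : p ∈ Uᶜ
  · refine IsNowhereDense.isMeagre ((hUc.connectedComponentIn p).isNowhereDense_iff.2 ?_)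
    refine hX.interior_eq_empty (isProperClosedConnected_connectedComponentIn hUc ?_ hp)
    exact compl_ne_univ.2 (nonempty_of_mem_countableBasis hU)
  · simpa [connectedComponentIn_eq_empty hp] using IsMeagre.empty

theorem infinite_range_composant [PreconnectedSpace X] [SecondCountableTopology X]
    [BaireSpace X] [T1Space X] [Nontrivial X] : (range (composant : X → Set X)).Infinite := by
  intro hfin
  have hunion : ⋃ S ∈ range (composant : X → Set X), S = univ :=
    eq_univ_of_forall fun x => mem_biUnion (mem_range_self x) (mem_composant_self x)
  refine not_isMeagre_of_isOpen (X := X) isOpen_univ univ_nonempty ?_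
  rw [← hunion]
  exact isMeagre_biUnion hfin.countable (forall_mem_range.2 hX.isMeagre_composant)

end IsIndecomposable

end Composant

section Metric

variable {X : Type*} [MetricSpace X] [CompactSpace X] [PreconnectedSpace X]

theorem exists_isProperClosedConnected_mem_inter_sphere {p y : X} {δ : ℝ} (hδ : 0 < δ)
    (hp : p ∉ ball y δ) :
    ∃ A, IsProperClosedConnected A ∧ p ∈ A ∧ (A ∩ sphere y δ).Nonempty := by
  have hE : IsClosed (ball y δ)ᶜ := isOpen_ball.isClosed_compl
  have hEu : (ball y δ)ᶜ ≠ univ := compl_ne_univ.2 ⟨y, mem_ball_self hδ⟩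
  obtain ⟨z, hzA, hz⟩ := connectedComponentIn_inter_frontier_nonempty hE hEu hp
  exact ⟨_, isProperClosedConnected_connectedComponentIn hE hEu hp, mem_connectedComponentIn hp,
    z, hzA, frontier_ball_subset_sphere (frontier_compl (ball y δ) ▸ hz)⟩

/-- `K` is the union of one nontrivial continuum through `p` with continua through `p` reaching
within `ε / 2` of every point of a finite `ε / 2`-net. -/
theorem IsIndecomposable.exists_nontrivial_forall_infDist_lt [Nontrivial X] (hX : IsIndecomposable X)
    (p : X) {ε : ℝ} (hε : 0 < ε) :
    ∃ K, IsProperClosedConnected K ∧ K.Nontrivial ∧ p ∈ K ∧ ∀ x, infDist x K < ε := by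
  obtain ⟨q, hqp⟩ := exists_ne p
  have hpq : 0 < dist p q := dist_pos.2 hqp.symm
  obtain ⟨N, hN, hpN, w, hwN, hw⟩ := exists_isProperClosedConnected_mem_inter_sphere
    (half_pos hpq) (p := p) (y := q) (by rw [mem_ball]; linarith)
  have hwp : w ≠ p := by
    rintro rfl
    rw [mem_sphere] at hw
    linarith
  have hreach : ∀ y, ∃ A, IsProperClosedConnected A ∧ p ∈ A ∧ ∃ z ∈ A, dist z y ≤ ε / 2 := by
    intro y
    by_cases hpy : p ∈ ball y (ε / 2)
    · exact ⟨{p}, isProperClosedConnected_singleton p, rfl, p, rfl, (mem_ball.1 hpy).le⟩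
    · obtain ⟨A, hA, hpA, z, hzA, hz⟩ :=
        exists_isProperClosedConnected_mem_inter_sphere (half_pos hε) hpy
      exact ⟨A, hA, hpA, z, hzA, (mem_sphere.1 hz).le⟩
  choose A hA hpA z hzA hz using hreach
  obtain ⟨t, -, ht⟩ := isCompact_univ.elim_nhds_subcover (fun y : X => ball y (ε / 2))
    fun y _ => ball_mem_nhds y (half_pos hε)
  refine ⟨N ∪ ⋃ y ∈ t, A y, hX.isProperClosedConnected_union_biUnion hN hpN
    (fun y => ⟨hA y, hpA y⟩) t, ⟨w, Or.inl hwN, p, Or.inl hpN, hwp⟩, Or.inl hpN, fun x => ?_⟩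
  obtain ⟨y, hyt, hxy⟩ := mem_iUnion₂.1 (ht (mem_univ x))
  calc infDist x (N ∪ ⋃ y ∈ t, A y) ≤ dist x (z y) :=
        infDist_le_dist_of_mem (Or.inr (mem_biUnion hyt (hzA y)))
    _ ≤ dist x y + dist (z y) y := dist_triangle_right x (z y) y
    _ < ε / 2 + ε / 2 := add_lt_add_of_lt_of_le (mem_ball.1 hxy) (hz y)
    _ = ε := add_halves ε

end Metric

/-- Let `(X, d)` be an indecomposable metric continuum. Then there is a
sequence of pairwise disjoint proper subcontinua `K n` of `X` with
`d_H(K n, X) = sup_{x ∈ X} d(x, K n) → 0`. -/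
theorem stmt_5 {X : Type*} [MetricSpace X] [CompactSpace X] [ConnectedSpace X] [Nontrivial X]
    (hindec : ¬ ∃ A B : Set X,
      IsClosed A ∧ IsConnected A ∧ A ≠ Set.univ ∧
      IsClosed B ∧ IsConnected B ∧ B ≠ Set.univ ∧ A ∪ B = Set.univ) :
    ∃ K : ℕ → Set X,
      (∀ n, IsCompact (K n) ∧ IsConnected (K n) ∧ (K n).Nontrivial ∧ K n ≠ Set.univ) ∧
      (∀ m n, m ≠ n → Disjoint (K m) (K n)) ∧
      Filter.Tendsto (fun n => ⨆ x : X, Metric.infDist x (K n)) Filter.atTop (nhds 0) := by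
  have hX : IsIndecomposable X := hindec
  let C := hX.infinite_range_composant.natEmbedding
  choose p hp using fun n => (C n).2
  choose K hK hKnt hpK hKdense using fun n : ℕ =>
    hX.exists_nontrivial_forall_infDist_lt (p n) (Nat.one_div_pos_of_nat (α := ℝ) (n := n))
  refine ⟨K, fun n => ⟨(hK n).isClosed.isCompact, (hK n).isConnected, hKnt n, (hK n).ne_univ⟩,
    fun m n hmn => ?_, ?_⟩
  · have hC : composant (p m) ≠ composant (p n) := by
      rw [hp, hp]
      exact fun h => hmn (C.injective (Subtype.ext h))
    exact (hX.disjoint_composant hC).mono (subset_composant (hK m) (hpK m))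
      (subset_composant (hK n) (hpK n))
  · exact squeeze_zero (fun n => Real.iSup_nonneg fun x => infDist_nonneg)
      (fun n => ciSup_le fun x => (hKdense n x).le) tendsto_one_div_add_atTop_nhds_zero_nat
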